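/- arXiv:2506.18085 — 2 statements merged into one kernel-verified Lean document; each statement's English description precedes it below -/
import Mathlib

section
/- For the natural 2-dimensional representation σ_n of O(2) (pulled back along O(2) → O(2)/C_n) and the dihedral subgroup D_{2t} with Weyl group W_t = N_{O(2)}(D_{2t})/D_{2t} = D_{4t}/D_{2t} ≅ ℤ/2: the fixed-point representation σ_n^{D_{2t}} of W_t is the trivial 1-dimensional representation if 2t | n, the sign representation if t | n but 2t ∤ n, and zero if t ∤ n. -/
/-!
`D_{2t}` consists of the rotations `R(2πk/t)` and reflections `S(2πk/t)`; under `σ_n` these act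
by `R(n·2πk/t)` and `S(n·2πk/t)`. A generator of the Weyl group `D_{4t}/D_{2t}` is represented
by the rotation `R(π/t) ∈ D_{4t}`, which acts on the fixed space via `σ_n(R(π/t)) = R(nπ/t)`.

When `t ∣ n` every angle `n·2πk/t` is a multiple of `2π`, so `σ_n(D_{2t})` is just `{1, Ref 0}`,
whose common fixed line is the first axis, and the Weyl generator acts by
`Rot ((n/t)π) = (-1)^(n/t)`. When `t ∤ n` the rotation `Rot (2πn/t)` is nontrivial, so
`Rot (2πn/t) - 1` has nonzero determinant `2 (1 - cos (2πn/t))` and only `0` is fixed.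
-/

noncomputable section
open Matrix Real

/-- Rotation through θ. -/
def Rot (θ : ℝ) : Matrix (Fin 2) (Fin 2) ℝ := !![cos θ, -sin θ; sin θ, cos θ]

/-- Reflection in the line at angle θ/2. -/
def Ref (θ : ℝ) : Matrix (Fin 2) (Fin 2) ℝ := !![cos θ, sin θ; sin θ, -cos θ]

/-- The common fixed subspace of a set of matrices acting on ℝ². -/
def fixR (S : Set (Matrix (Fin 2) (Fin 2) ℝ)) : Submodule ℝ (Fin 2 → ℝ) :=
  ⨅ A ∈ S, LinearMap.ker (Matrix.mulVecLin A - LinearMap.id)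

/-- The image of the dihedral group D_{2t} under σ_n. -/
def sigmaDih (n t : ℕ) : Set (Matrix (Fin 2) (Fin 2) ℝ) :=
  (Set.range fun k : ℤ => Rot (n * (2 * π * k / t))) ∪
    Set.range fun k : ℤ => Ref (n * (2 * π * k / t))

lemma mem_fixR {S : Set (Matrix (Fin 2) (Fin 2) ℝ)} {v : Fin 2 → ℝ} :
    v ∈ fixR S ↔ ∀ A ∈ S, A *ᵥ v = v := by
  simp only [fixR, Submodule.mem_iInf, LinearMap.mem_ker, LinearMap.sub_apply,
    Matrix.mulVecLin_apply, LinearMap.id_apply, sub_eq_zero]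

lemma rot_mem_sigmaDih (n t : ℕ) (k : ℤ) : Rot (n * (2 * π * k / t)) ∈ sigmaDih n t :=
  Or.inl ⟨k, rfl⟩

lemma sin_int_mul_two_pi (k : ℤ) : sin (k * (2 * π)) = 0 :=
  (sin_periodic.int_mul_eq k).trans sin_zero

lemma rot_int_mul_two_pi (k : ℤ) : Rot (k * (2 * π)) = 1 := by
  ext i j
  fin_cases i <;> fin_cases j <;> simp [Rot, sin_int_mul_two_pi]

lemma ref_int_mul_two_pi (k : ℤ) : Ref (k * (2 * π)) = Ref 0 := by
  simp [Ref, sin_int_mul_two_pi]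

lemma rot_nat_mul_pi (k : ℕ) : Rot (k * π) = (-1 : ℝ) ^ k • 1 := by
  ext i j
  fin_cases i <;> fin_cases j <;> simp [Rot, cos_nat_mul_pi]

lemma det_rot_sub_one (θ : ℝ) : (Rot θ - 1).det = 2 * (1 - cos θ) := by
  have : Rot θ - 1 = !![cos θ - 1, -sin θ; sin θ, cos θ - 1] := by
    ext i j
    fin_cases i <;> fin_cases j <;> simp [Rot]
  rw [this, Matrix.det_fin_two_of]
  linear_combination sin_sq_add_cos_sq θ

lemma eq_zero_of_rot_mulVec_eq_self {θ : ℝ} (hθ : cos θ ≠ 1) {v : Fin 2 → ℝ}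
    (hv : Rot θ *ᵥ v = v) : v = 0 := by
  refine Matrix.eq_zero_of_mulVec_eq_zero (M := Rot θ - 1) ?_ ?_
  · rw [det_rot_sub_one]
    exact mul_ne_zero two_ne_zero (sub_ne_zero.2 hθ.symm)
  · rw [Matrix.sub_mulVec, Matrix.one_mulVec, hv, sub_self]

lemma ref_zero_mulVec_eq_self_iff {v : Fin 2 → ℝ} : Ref 0 *ᵥ v = v ↔ v 1 = 0 := by
  constructor
  · intro h
    simpa [Ref, Matrix.mulVec, dotProduct, CharZero.neg_eq_self_iff] using congrFun h 1
  · intro h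
    ext i
    fin_cases i <;> simp [Ref, Matrix.mulVec, dotProduct, h]

lemma mem_span_single_zero_iff {v : Fin 2 → ℝ} : v ∈ ℝ ∙ Pi.single 0 1 ↔ v 1 = 0 := by
  rw [Submodule.mem_span_singleton]
  refine ⟨fun ⟨a, ha⟩ => by simp [← ha], fun h => ⟨v 0, ?_⟩⟩
  ext i
  fin_cases i <;> simp [h]

lemma fixR_one_ref_zero : fixR {1, Ref 0} = ℝ ∙ Pi.single 0 1 := by
  ext v
  simp only [mem_fixR, Set.forall_mem_insert, Set.mem_singleton_iff, forall_eq,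
    Matrix.one_mulVec, true_and, ref_zero_mulVec_eq_self_iff, mem_span_single_zero_iff]

lemma natCast_mul_div_of_dvd {n t : ℕ} (h : t ∣ n) (x : ℝ) :
    (n : ℝ) * (x / t) = (n / t : ℕ) * x := by
  rw [Nat.cast_div_charZero h]
  ring

lemma sigmaDih_of_dvd {n t : ℕ} (h : t ∣ n) : sigmaDih n t = {1, Ref 0} := by
  have hangle (k : ℤ) : (n : ℝ) * (2 * π * k / t) = ((n / t : ℕ) * k : ℤ) * (2 * π) := by
    rw [natCast_mul_div_of_dvd h, Int.cast_mul, Int.cast_natCast]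
    ring
  simp only [sigmaDih, hangle, rot_int_mul_two_pi, ref_int_mul_two_pi, Set.range_const,
    Set.singleton_union]

lemma rot_mul_pi_div_of_dvd {n t : ℕ} (h : t ∣ n) :
    Rot (n * (π / t)) = (-1 : ℝ) ^ (n / t) • 1 := by
  rw [natCast_mul_div_of_dvd h, rot_nat_mul_pi]

lemma Nat.even_div_iff_two_mul_dvd {n t : ℕ} (h : t ∣ n) : Even (n / t) ↔ 2 * t ∣ n := by
  rw [even_iff_two_dvd, Nat.dvd_div_iff_mul_dvd h, mul_comm]

lemma dvd_of_cos_eq_one {n t : ℕ} (ht : t ≠ 0) (h : cos (n * (2 * π / t)) = 1) : t ∣ n := by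
  obtain ⟨j, hj⟩ := (Real.cos_eq_one_iff _).1 h
  have hjt : (j * t : ℤ) = n := by
    have : (t : ℝ) ≠ 0 := by exact_mod_cast ht
    field_simp at hj
    exact_mod_cast hj
  exact Int.natCast_dvd_natCast.1 ⟨j, by rw [← hjt, mul_comm]⟩

theorem weyl_action_on_dihedral_fixed_points_general
    (n t : ℕ) (ht : 1 ≤ t) :
    (¬ t ∣ n → fixR (sigmaDih n t) = ⊥) ∧
    (t ∣ n → Module.finrank ℝ ↥(fixR (sigmaDih n t)) = 1) ∧
    ((2 * t) ∣ n → ∀ v ∈ fixR (sigmaDih n t), (Rot (n * (π / t))).mulVec v = v) ∧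
    (t ∣ n → ¬ (2 * t) ∣ n → ∀ v ∈ fixR (sigmaDih n t), (Rot (n * (π / t))).mulVec v = -v) := by
  refine ⟨fun hndvd => ?_, fun hdvd => ?_, fun h2dvd v _ => ?_, fun hdvd h2ndvd v _ => ?_⟩
  · have hcos : cos (n * (2 * π / t)) ≠ 1 := fun h => hndvd (dvd_of_cos_eq_one (by omega) h)
    refine eq_bot_iff.2 fun v hv => eq_zero_of_rot_mulVec_eq_self hcos ?_
    simpa using mem_fixR.1 hv _ (rot_mem_sigmaDih n t 1)
  · rw [sigmaDih_of_dvd hdvd, fixR_one_ref_zero]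
    exact finrank_span_singleton (by simp)
  · have hdvd : t ∣ n := dvd_trans (dvd_mul_left t 2) h2dvd
    have heven : Even (n / t) := (Nat.even_div_iff_two_mul_dvd hdvd).2 h2dvd
    rw [rot_mul_pi_div_of_dvd hdvd, heven.neg_one_pow, one_smul, Matrix.one_mulVec]
  · have hodd : Odd (n / t) :=
      Nat.not_even_iff_odd.1 (mt (Nat.even_div_iff_two_mul_dvd hdvd).1 h2ndvd)
    rw [rot_mul_pi_div_of_dvd hdvd, hodd.neg_one_pow, neg_smul, one_smul, Matrix.neg_mulVec,
      Matrix.one_mulVec]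

theorem weyl_action_on_dihedral_fixed_points
    (n t : ℕ) (hn : 1 ≤ n) (ht : 1 ≤ t) :
    (¬ t ∣ n → fixR (sigmaDih n t) = ⊥) ∧
    (t ∣ n → Module.finrank ℝ ↥(fixR (sigmaDih n t)) = 1) ∧
    ((2 * t) ∣ n → ∀ v ∈ fixR (sigmaDih n t), (Rot (n * (π / t))).mulVec v = v) ∧
    (t ∣ n → ¬ (2 * t) ∣ n → ∀ v ∈ fixR (sigmaDih n t), (Rot (n * (π / t))).mulVec v = -v) :=
  weyl_action_on_dihedral_fixed_points_general n t ht
end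
end

section
/- Let O = ∏_{s≥1} ℚ[c] (graded, c of degree −2), let E ⊆ O be the multiplicative set of Euler classes c^v = (c^{v(s)})_s for functions v : ℕ≥1 → ℕ that are zero almost everywhere, let t = E^{−1}O, and define 𝕀 by the exact sequence 0 → O → t → 𝕀 → 0. Then 𝕀 ≅ ⊕_{s≥1} I_s, where I_s ≅ ℚ[c,c^{−1}]/ℚ[c] is the copy of the torsion module I in the s-th factor; in particular the quotient of the localization by the product is a direct sum, not a product. -/
/-!
STATEMENT 19: Let O = ∏_{s≥1} ℚ[c] (graded, c of degree −2), let E ⊆ O be the multiplicative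
set of Euler classes c^v = (c^{v(s)})_s for functions v : ℕ≥1 → ℕ that are zero almost
everywhere, let t = E⁻¹O, and define 𝕀 by the exact sequence 0 → O → t → 𝕀 → 0.  Then
𝕀 ≅ ⊕_{s≥1} I_s, where I_s ≅ ℚ[c,c⁻¹]/ℚ[c] is the copy of the torsion module I in the s-th
factor; in particular the quotient of the localization by the product is a direct sum, not a
product.

Formalization: O is the product, indexed by the subgroups C_s, of copies of ℚ[X]; E is the
submonoid of tuples (X^{v s})_s with v finitely supported; t is the localization of O at E;
𝕀 is the quotient of t by the image of O.  Each I_s is the ℚ[X]-module ℚ[X,X⁻¹]/ℚ[X]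
(modelled by Laurent polynomials modulo polynomials), viewed as an O-module through
evaluation of the s-th coordinate.  The claim is an isomorphism of O-modules
𝕀 ≅ ⊕_s I_s (O-linearity automatically matches the s-th summand with the part of 𝕀
supported at the s-th factor, via the idempotents of O).
-/

noncomputable section

open Polynomial DirectSum

/-- `O = ∏_s ℚ[c]`: the ring of functions on the set of finite subgroups. -/
abbrev ORing : Type := ℕ → Polynomial ℚ

/-- The multiplicative set of Euler classes `c^v`, for `v` finitely supported. -/
def eulerClasses : Submonoid ORing where
  carrier := {f | ∃ v : ℕ →₀ ℕ, f = fun s => Polynomial.X ^ (v s)}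
  one_mem' := ⟨0, by funext s; simp⟩
  mul_mem' := by
    rintro a b ⟨v, rfl⟩ ⟨w, rfl⟩
    exact ⟨v + w, by funext s; simp [pow_add]⟩

/-- `t = E⁻¹O`, the Tate ring. -/
abbrev tRing := Localization eulerClasses

/-- `𝕀 = t/O`, the cokernel of `O → t`. -/
def II := tRing ⧸ LinearMap.range (Algebra.linearMap ORing tRing)

instance : AddCommGroup II :=
  inferInstanceAs (AddCommGroup (tRing ⧸ LinearMap.range (Algebra.linearMap ORing tRing)))
instance : Module ORing II :=
  inferInstanceAs (Module ORing (tRing ⧸ LinearMap.range (Algebra.linearMap ORing tRing)))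

/-- The image of ℚ[c] in ℚ[c,c⁻¹], as a ℚ[c]-submodule. -/
def polyImage : Submodule (Polynomial ℚ) (LaurentPolynomial ℚ) :=
  LinearMap.range (Algebra.linearMap (Polynomial ℚ) (LaurentPolynomial ℚ))

/-- `I_s = ℚ[c,c⁻¹]/ℚ[c]`: the copy of the torsion module I for the s-th factor of O. -/
def Icomp (_s : ℕ) := LaurentPolynomial ℚ ⧸ polyImage

instance (s : ℕ) : AddCommGroup (Icomp s) :=
  inferInstanceAs (AddCommGroup (LaurentPolynomial ℚ ⧸ polyImage))

instance (s : ℕ) : Module (Polynomial ℚ) (Icomp s) :=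
  inferInstanceAs (Module (Polynomial ℚ) (LaurentPolynomial ℚ ⧸ polyImage))

/-- `I_s` is an O-module through evaluation of the s-th coordinate. -/
instance (s : ℕ) : Module ORing (Icomp s) :=
  Module.compHom _ (Pi.evalRingHom (fun _ => Polynomial ℚ) s)

/-!
Write an element of `t` as `f / c^v` with `v` finitely supported. In the `s`-th coordinate it is
the Laurent polynomial `f s · c^(-v s)`, so reducing modulo `ℚ[c]` coordinatewise gives an
`O`-linear map `t → ∏ I_s`. Its kernel is `O`, since `f / c^v` has polynomial coordinates exactly
when `c^v` divides `f`. Its image is `⨁ I_s`: the `s`-th coordinate vanishes wherever `v s = 0`,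
and a principal part `p · c^(-n)` in the single coordinate `s` is the image of
`single s p / c^(single s n)`.
-/

def Icomp.mk (s : ℕ) : LaurentPolynomial ℚ →ₗ[ℚ[X]] Icomp s :=
  polyImage.mkQ

lemma Icomp.mk_eq_zero_iff {s : ℕ} {l : LaurentPolynomial ℚ} :
    Icomp.mk s l = 0 ↔ ∃ g : ℚ[X], toLaurent g = l :=
  Submodule.Quotient.mk_eq_zero _

namespace Tate

open LaurentPolynomial

def eulerClass (v : ℕ →₀ ℕ) : eulerClasses :=
  ⟨fun s => X ^ v s, v, rfl⟩

lemma exists_eq_mk'_eulerClass (x : tRing) :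
    ∃ (f : ORing) (v : ℕ →₀ ℕ), x = IsLocalization.mk' tRing f (eulerClass v) := by
  obtain ⟨⟨f, ⟨_, v, rfl⟩⟩, rfl⟩ := IsLocalization.mk'_surjective eulerClasses x
  exact ⟨f, v, rfl⟩

def toLaurentPi : ORing →+* (ℕ → ℚ[T;T⁻¹]) :=
  RingHom.pi fun s => Polynomial.toLaurent.comp (Pi.evalRingHom _ s)

lemma toLaurentPi_apply (f : ORing) (s : ℕ) : toLaurentPi f s = toLaurent (f s) := rfl

lemma isUnit_toLaurentPi (e : eulerClasses) : IsUnit (toLaurentPi e) := by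
  obtain ⟨_, v, rfl⟩ := e
  refine isUnit_iff_exists_inv.mpr ⟨fun s => T (-(v s : ℤ)), funext fun s => ?_⟩
  change toLaurent (X ^ v s) * T (-(v s : ℤ)) = 1
  rw [Polynomial.toLaurent_X_pow, ← T_add, add_neg_cancel, T_zero]

def tateToLaurent : tRing →+* (ℕ → ℚ[T;T⁻¹]) :=
  IsLocalization.lift isUnit_toLaurentPi

lemma tateToLaurent_algebraMap (f : ORing) :
    tateToLaurent (algebraMap ORing tRing f) = toLaurentPi f :=
  IsLocalization.lift_eq _ _

lemma tateToLaurent_mk' (f : ORing) (v : ℕ →₀ ℕ) (s : ℕ) :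
    tateToLaurent (IsLocalization.mk' tRing f (eulerClass v)) s = toLaurent (f s) * T (-(v s)) := by
  have h : tateToLaurent (IsLocalization.mk' tRing f (eulerClass v)) =
      fun s => toLaurent (f s) * T (-(v s)) :=
    (IsLocalization.lift_mk'_spec _ _ _ _).mpr <| funext fun s => by
      simp [toLaurentPi_apply, eulerClass, Polynomial.toLaurent_X_pow]
  exact congrFun h s

def principalParts : tRing →ₗ[ORing] (∀ s, Icomp s) where
  toFun x s := Icomp.mk s (tateToLaurent x s)
  map_add' x y := funext fun s => by simp
  map_smul' r x := funext fun s => by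
    have hsmul : r • x = algebraMap ORing tRing r * x := Algebra.smul_def r x
    rw [hsmul, map_mul, tateToLaurent_algebraMap, Pi.mul_apply, toLaurentPi_apply]
    exact (Icomp.mk s).map_smul (r s) _

lemma principalParts_apply (x : tRing) (s : ℕ) :
    principalParts x s = Icomp.mk s (tateToLaurent x s) :=
  rfl

lemma ker_principalParts :
    LinearMap.ker principalParts = LinearMap.range (Algebra.linearMap ORing tRing) := by
  refine le_antisymm (fun x hx => ?_) ?_
  · obtain ⟨f, v, rfl⟩ := exists_eq_mk'_eulerClass x
    have hpoly (s : ℕ) : ∃ g : ℚ[X], toLaurent g = toLaurent (f s) * T (-(v s)) := by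
      rw [← tateToLaurent_mk', ← Icomp.mk_eq_zero_iff]
      exact congrFun hx s
    choose g hg using hpoly
    have hf : f = (eulerClass v : ORing) * g := funext fun s => Polynomial.toLaurent_injective <| by
      simp [eulerClass, hg, Polynomial.toLaurent_X_pow]
    exact ⟨g, by rw [Algebra.linearMap_apply, hf, IsLocalization.mk'_mul_cancel_left]⟩
  · rintro _ ⟨g, rfl⟩
    exact funext fun s => Icomp.mk_eq_zero_iff.mpr
      ⟨g s, by simp [tateToLaurent_algebraMap, toLaurentPi_apply]⟩

lemma principalParts_mk'_apply_eq_zero (f : ORing) {v : ℕ →₀ ℕ} {s : ℕ} (hs : v s = 0) :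
    principalParts (IsLocalization.mk' tRing f (eulerClass v)) s = 0 :=
  Icomp.mk_eq_zero_iff.mpr ⟨f s, by simp [tateToLaurent_mk', hs]⟩

lemma principalParts_mk'_single (s : ℕ) (p : ℚ[X]) (n : ℕ) :
    principalParts (IsLocalization.mk' tRing (Pi.single s p) (eulerClass (Finsupp.single s n))) =
      ⇑(DirectSum.of Icomp s (Icomp.mk s (toLaurent p * T (-n)))) := by
  funext s'
  rcases eq_or_ne s s' with rfl | hs
  · rw [DirectSum.of_eq_same]
    simp [principalParts_apply, tateToLaurent_mk']
  · rw [DirectSum.of_eq_of_ne _ _ _ hs.symm]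
    simp [principalParts_apply, tateToLaurent_mk', hs]

lemma range_principalParts :
    LinearMap.range principalParts =
      LinearMap.range (DFinsupp.coeFnLinearMap ORing : (⨁ s, Icomp s) →ₗ[ORing] ∀ s, Icomp s) := by
  refine le_antisymm ?_ ?_
  · rintro _ ⟨x, rfl⟩
    obtain ⟨f, v, rfl⟩ := exists_eq_mk'_eulerClass x
    set x := IsLocalization.mk' tRing f (eulerClass v)
    refine ⟨DFinsupp.mk v.support fun s => principalParts x s, funext fun s => ?_⟩
    by_cases hs : s ∈ v.support
    · simp [hs]
    · simp only [DFinsupp.mk_apply, dif_neg hs, DFinsupp.coeFnLinearMap_apply]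
      exact (principalParts_mk'_apply_eq_zero f (Finsupp.notMem_support_iff.mp hs)).symm
  · rintro _ ⟨d, rfl⟩
    induction d using DirectSum.induction_on with
    | zero => simp
    | of s m =>
      obtain ⟨l, rfl⟩ := Submodule.mkQ_surjective polyImage m
      obtain ⟨n, p, hp⟩ := exists_T_pow l
      have hl : l = toLaurent p * T (-n) := by rw [hp, mul_T_assoc, add_neg_cancel, T_zero, mul_one]
      exact ⟨_, by rw [principalParts_mk'_single, ← hl]; rfl⟩
    | add a b ha hb =>
      rw [map_add]
      exact add_mem ha hb

end Tate

theorem tate_cokernel_is_direct_sum_of_torsion_modules :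
    Nonempty (II ≃ₗ[ORing] (⨁ s : ℕ, Icomp s)) :=
  ⟨(Submodule.quotEquivOfEq _ _ Tate.ker_principalParts.symm).trans <|
    Tate.principalParts.quotKerEquivRange.trans <|
      (LinearEquiv.ofEq _ _ Tate.range_principalParts).trans <|
        (LinearEquiv.ofInjective _ DFunLike.coe_injective).symm⟩
end
end
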